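/- Let (M,I,J,K,g_M) be a hyperkähler manifold, (N,g_N) a Riemannian manifold, and F : (M,I,J,K,g_M) → (N,g_N) an almost h-conformal slant submersion with (I,J,K) an almost h-conformal slant basis. Then for every R ∈ {I,J,K}: (1) V̂∇_V φ_R W + T_V ω_R W = φ_R V̂∇_V W + B_R T_V W and T_V φ_R W + H∇_V ω_R W = C_R T_V W + ω_R V̂∇_V W for all vertical V,W; (2) A_X C_R Y + V∇_X B_R Y = φ_R A_X Y + B_R H∇_X Y and H∇_X C_R Y + A_X B_R Y = ω_R A_X Y + C_R H∇_X Y for all horizontal X,Y; (3) A_X ω_R V + V∇_X φ_R V = B_R A_X V + φ_R V∇_X V and H∇_X ω_R V + A_X φ_R V = C_R A_X V + ω_R V∇_X V for vertical V and horizontal X. -/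

import Mathlib

open scoped BigOperators

/-- Abstract framework for a horizontally conformal submersion `F : (M, g_M) → (N, g_N)`
between Riemannian manifolds.  `M` is the set of points of the total manifold,
`VFM` plays the role of the space of smooth vector fields on `M`
(a module over the ring of functions `M → ℝ`), and `VFN` plays the role of the
space of sections of the pullback bundle `F*(TN)` (vector fields along `F`).
`gM`, `gN` are the (pulled back) Riemannian metrics, `nabla` is the Levi-Civita
connection of `gM`, `Vp`/`Hp` are the vertical/horizontal projections onto
`ker F_*` and `(ker F_*)^⊥`, `Fstar` is the differential `F_*`, `nablaF` is
the pullback connection `∇^F`, `lam` is the dilation `λ`, and `dimN = dim N`. -/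
structure HorizConfSubmersion (M : Type) (VFM : Type) (VFN : Type)
    [AddCommGroup VFM] [Module (M → ℝ) VFM]
    [AddCommGroup VFN] [Module (M → ℝ) VFN] : Type where
  gM : VFM → VFM → M → ℝ
  gN : VFN → VFN → M → ℝ
  nabla : VFM → VFM → VFM
  bracket : VFM → VFM → VFM
  act : VFM → (M → ℝ) → M → ℝ
  grad : (M → ℝ) → VFM
  Vp : VFM → VFM
  Hp : VFM → VFM
  Fstar : VFM → VFN
  nablaF : VFM → VFN → VFN
  lam : M → ℝ
  dimN : ℕ
  lam_pos : ∀ p, 0 < lam p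
  gM_symm : ∀ X Y, gM X Y = gM Y X
  gM_add_left : ∀ X Y Z, gM (X + Y) Z = gM X Z + gM Y Z
  gM_smul_left : ∀ (f : M → ℝ) (X Y : VFM), gM (f • X) Y = f * gM X Y
  gN_symm : ∀ s t, gN s t = gN t s
  gN_add_left : ∀ s t u, gN (s + t) u = gN s u + gN t u
  gN_smul_left : ∀ (f : M → ℝ) (s t : VFN), gN (f • s) t = f * gN s t
  Vp_add : ∀ E E', Vp (E + E') = Vp E + Vp E'
  Hp_add : ∀ E E', Hp (E + E') = Hp E + Hp E'
  Vp_smul : ∀ (f : M → ℝ) (E : VFM), Vp (f • E) = f • Vp E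
  Hp_smul : ∀ (f : M → ℝ) (E : VFM), Hp (f • E) = f • Hp E
  Vp_add_Hp : ∀ E, Vp E + Hp E = E
  Vp_Vp : ∀ E, Vp (Vp E) = Vp E
  Hp_Hp : ∀ E, Hp (Hp E) = Hp E
  Vp_Hp : ∀ E, Vp (Hp E) = 0
  Hp_Vp : ∀ E, Hp (Vp E) = 0
  gM_VH : ∀ E E', gM (Vp E) (Hp E') = 0
  nabla_add_left : ∀ X Y Z, nabla (X + Y) Z = nabla X Z + nabla Y Z
  nabla_add_right : ∀ X Y Z, nabla X (Y + Z) = nabla X Y + nabla X Z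
  nabla_smul_left : ∀ (f : M → ℝ) (X Y : VFM), nabla (f • X) Y = f • nabla X Y
  nabla_leibniz : ∀ (f : M → ℝ) (X Y : VFM),
    nabla X (f • Y) = act X f • Y + f • nabla X Y
  nabla_torsion_free : ∀ X Y, nabla X Y - nabla Y X = bracket X Y
  nabla_metric : ∀ X Y Z, act X (gM Y Z) = gM (nabla X Y) Z + gM Y (nabla X Z)
  grad_spec : ∀ (f : M → ℝ) (X : VFM), gM (grad f) X = act X f
  Fstar_add : ∀ E E', Fstar (E + E') = Fstar E + Fstar E'
  Fstar_smul : ∀ (f : M → ℝ) (E : VFM), Fstar (f • E) = f • Fstar E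
  Fstar_vert : ∀ E, Fstar (Vp E) = 0
  /-- `F` is a submersion: every vector field along `F` comes from a horizontal field. -/
  Fstar_surj : ∀ s, ∃ X, Vp X = 0 ∧ Fstar X = s
  /-- horizontal conformality: `g_N(F_* X, F_* Y) = λ² g_M(X, Y)` on horizontal fields. -/
  conformal : ∀ X Y, Vp X = 0 → Vp Y = 0 →
    gN (Fstar X) (Fstar Y) = fun p => lam p ^ 2 * gM X Y p
  nablaF_add : ∀ X s t, nablaF X (s + t) = nablaF X s + nablaF X t
  nablaF_add_left : ∀ X Y s, nablaF (X + Y) s = nablaF X s + nablaF Y s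
  nablaF_smul_left : ∀ (f : M → ℝ) (X : VFM) (s : VFN),
    nablaF (f • X) s = f • nablaF X s
  nablaF_leibniz : ∀ (f : M → ℝ) (X : VFM) (s : VFN),
    nablaF X (f • s) = act X f • s + f • nablaF X s
  nablaF_metric : ∀ X s t, act X (gN s t) = gN (nablaF X s) t + gN s (nablaF X t)
  /-- symmetry of the second fundamental form `(∇F_*)(X,Y)`. -/
  sff_symm : ∀ X Y, nablaF X (Fstar Y) - Fstar (nabla X Y)
    = nablaF Y (Fstar X) - Fstar (nabla Y X)
  /-- the fundamental formula for `(∇F_*)` of a horizontally conformal submersion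
  on horizontal vector fields. -/
  sff_horizontal : ∀ X Y, Vp X = 0 → Vp Y = 0 →
    nablaF X (Fstar Y) - Fstar (nabla X Y)
      = act X (fun p => Real.log (lam p)) • Fstar Y
        + act Y (fun p => Real.log (lam p)) • Fstar X
        - gM X Y • Fstar (grad fun p => Real.log (lam p))
  /-- `N` is `dimN`-dimensional: there is a global orthonormal frame of sections
  along `F` (an abstract simplification). -/
  frameN : ∃ e : Fin dimN → VFN,
    (∀ i j, gN (e i) (e j) = fun _ => if i = j then (1 : ℝ) else 0) ∧
    ∀ s, s = ∑ i, gN s (e i) • e i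

namespace HorizConfSubmersion

variable {M VFM VFN : Type} [AddCommGroup VFM] [Module (M → ℝ) VFM]
    [AddCommGroup VFN] [Module (M → ℝ) VFN]
variable (D : HorizConfSubmersion M VFM VFN)

/-- the O'Neill tensor `T`. -/
def T (E F : VFM) : VFM :=
  D.Hp (D.nabla (D.Vp E) (D.Vp F)) + D.Vp (D.nabla (D.Vp E) (D.Hp F))

/-- the O'Neill tensor `A`. -/
def A (E F : VFM) : VFM :=
  D.Hp (D.nabla (D.Hp E) (D.Vp F)) + D.Vp (D.nabla (D.Hp E) (D.Hp F))

/-- `V̂∇_V W = V∇_V W`. -/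
def hatNabla (V W : VFM) : VFM := D.Vp (D.nabla V W)

/-- vertical part of `R E`; this is `φ_R` on vertical fields and `B_R` on
horizontal fields. -/
def phi (R : VFM → VFM) (E : VFM) : VFM := D.Vp (R E)

/-- horizontal part of `R E`; this is `ω_R` on vertical fields and `C_R` on
horizontal fields. -/
def om (R : VFM → VFM) (E : VFM) : VFM := D.Hp (R E)

/-- `ln λ`. -/
noncomputable def lnlam : M → ℝ := fun p => Real.log (D.lam p)

/-- the second fundamental form `(∇F_*)(X,Y) = ∇^F_X F_* Y − F_*(∇_X Y)`. -/
def sff (X Y : VFM) : VFN := D.nablaF X (D.Fstar Y) - D.Fstar (D.nabla X Y)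

/-- `F` is horizontally homothetic: `X(λ) = 0` for every horizontal `X`. -/
def HorizHomothetic : Prop := ∀ X, D.Vp X = 0 → D.act X D.lam = 0

/-- the horizontal distribution `(ker F_*)^⊥` is integrable. -/
def HIntegrable : Prop :=
  ∀ X Y, D.Vp X = 0 → D.Vp Y = 0 → D.Vp (D.bracket X Y) = 0

/-- the horizontal distribution `(ker F_*)^⊥` defines a totally geodesic foliation. -/
def HTotallyGeodesic : Prop :=
  ∀ X Y, D.Vp X = 0 → D.Vp Y = 0 → D.Vp (D.nabla X Y) = 0

/-- the vertical distribution `ker F_*` defines a totally geodesic foliation. -/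
def VTotallyGeodesic : Prop :=
  ∀ V W, D.Hp V = 0 → D.Hp W = 0 → D.Hp (D.nabla V W) = 0

/-- `e` is a (local) orthonormal frame of the vertical distribution `ker F_*`. -/
def IsVertFrame {m : ℕ} (e : Fin m → VFM) : Prop :=
  (∀ i, D.Hp (e i) = 0) ∧
  (∀ i j, D.gM (e i) (e j) = fun _ => if i = j then (1 : ℝ) else 0) ∧
  (∀ V, D.Hp V = 0 → V = ∑ i, D.gM V (e i) • e i)

/-- `e` is a (local) orthonormal frame of `TM`. -/
def IsFrame {m : ℕ} (e : Fin m → VFM) : Prop :=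
  (∀ i j, D.gM (e i) (e j) = fun _ => if i = j then (1 : ℝ) else 0) ∧
  (∀ E, E = ∑ i, D.gM E (e i) • e i)

/-- `F` is a harmonic map: the tension field `τ(F) = trace (∇F_*)` vanishes. -/
def Harmonic : Prop :=
  ∀ (m : ℕ) (e : Fin m → VFM), D.IsFrame e → ∑ i, D.sff (e i) (e i) = 0

/-- `F` is a totally geodesic map: `(∇F_*) ≡ 0`. -/
def TotallyGeodesicMap : Prop := ∀ X Y, D.sff X Y = 0

/-- `X ∈ Γ(μ^R)`, the orthogonal complement of `ω_R(ker F_*)` inside `(ker F_*)^⊥`. -/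
def InMu (R : VFM → VFM) (X : VFM) : Prop :=
  D.Vp X = 0 ∧ ∀ V, D.Hp V = 0 → D.gM X (D.om R V) = 0

/-- `R` is an almost Hermitian structure on `(M, g_M)`:
`R` is `C^∞(M)`-linear, `R² = −id` and `R` is an isometry of `g_M`. -/
def IsHermitian (R : VFM → VFM) : Prop :=
  (∀ X Y, R (X + Y) = R X + R Y) ∧
  (∀ (f : M → ℝ) (X : VFM), R (f • X) = f • R X) ∧
  (∀ X, R (R X) = -X) ∧
  (∀ X Y, D.gM (R X) (R Y) = D.gM X Y)

/-- `R` is parallel with respect to the Levi-Civita connection: `∇R = 0`. -/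
def IsParallel (R : VFM → VFM) : Prop :=
  ∀ X Y, D.nabla X (R Y) = R (D.nabla X Y)

/-- the angle between `R X` and the vertical space is the constant `θ` for every
nonzero vertical `X` at every point: `‖vertical part of R X‖ = cos θ · ‖X‖`
pointwise (recall `‖R X‖ = ‖X‖`). -/
def IsSlantOp (R : VFM → VFM) (θ : ℝ) : Prop :=
  0 ≤ θ ∧ θ ≤ Real.pi / 2 ∧
  ∀ V, D.Hp V = 0 → ∀ p,
    Real.sqrt (D.gM (D.phi R V) (D.phi R V) p) = Real.cos θ * Real.sqrt (D.gM V V p)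

/-- `ω_R` is parallel: `(∇_V ω_R)(W) = H∇_V ω_R W − ω_R V̂∇_V W = 0` for all
vertical `V`, `W`. -/
def OmParallel (R : VFM → VFM) : Prop :=
  ∀ V W, D.Hp V = 0 → D.Hp W = 0 →
    D.Hp (D.nabla V (D.om R W)) = D.om R (D.Vp (D.nabla V W))

end HorizConfSubmersion

/-- a quaternionic Hermitian basis `(I, J, K)` for `(M, g_M)` (as in an almost
quaternionic Hermitian manifold):  `I² = J² = K² = −id`, `IJ = −JI = K`, and
`I, J, K` are isometries of `g_M`. -/
structure QuatHermTriple {M VFM VFN : Type} [AddCommGroup VFM] [Module (M → ℝ) VFM]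
    [AddCommGroup VFN] [Module (M → ℝ) VFN]
    (D : HorizConfSubmersion M VFM VFN) : Type where
  I : VFM → VFM
  J : VFM → VFM
  K : VFM → VFM
  hermitian_I : D.IsHermitian I
  hermitian_J : D.IsHermitian J
  hermitian_K : D.IsHermitian K
  mul_IJ : ∀ X, I (J X) = K X
  mul_JI : ∀ X, J (I X) = -(K X)

/-- a hyperkähler structure `(I, J, K, g_M)` on `M`: a quaternionic Hermitian
basis which is parallel with respect to the Levi-Civita connection of `g_M`. -/
structure HyperkahlerTriple {M VFM VFN : Type} [AddCommGroup VFM] [Module (M → ℝ) VFM]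
    [AddCommGroup VFN] [Module (M → ℝ) VFN]
    (D : HorizConfSubmersion M VFM VFN) extends QuatHermTriple D : Type where
  parallel_I : D.IsParallel I
  parallel_J : D.IsParallel J
  parallel_K : D.IsParallel K

/-!
Since `R` is parallel, `∇_E (R F) = R (∇_E F)` for all fields `E, F`. Splitting `R F` and
`∇_E F` into vertical and horizontal parts and projecting the identity onto `ker F_*` and
its orthogonal complement gives two identities; each of the six formulas is one of them,
once the O'Neill tensors `T_V` and `A_X` are evaluated on purely vertical or purely
horizontal arguments, where each reduces to a single projection of `∇`.
-/

namespace HorizConfSubmersion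

variable {M VFM VFN : Type} [AddCommGroup VFM] [Module (M → ℝ) VFM]
    [AddCommGroup VFN] [Module (M → ℝ) VFN]
variable (D : HorizConfSubmersion M VFM VFN)

lemma Vp_zero : D.Vp 0 = 0 := (AddMonoidHom.mk' D.Vp D.Vp_add).map_zero

lemma Hp_zero : D.Hp 0 = 0 := (AddMonoidHom.mk' D.Hp D.Hp_add).map_zero

lemma nabla_zero_right (E : VFM) : D.nabla E 0 = 0 :=
  (AddMonoidHom.mk' (D.nabla E) (D.nabla_add_right E)).map_zero

variable {D}

lemma Vp_eq_self {V : VFM} (hV : D.Hp V = 0) : D.Vp V = V := by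
  simpa [hV] using D.Vp_add_Hp V

lemma Hp_eq_self {X : VFM} (hX : D.Vp X = 0) : D.Hp X = X := by
  simpa [hX] using D.Vp_add_Hp X

lemma T_vert_horiz {V Z : VFM} (hV : D.Hp V = 0) (hZ : D.Vp Z = 0) :
    D.T V Z = D.Vp (D.nabla V Z) := by
  simp [T, Vp_eq_self hV, Hp_eq_self hZ, hZ, nabla_zero_right, Hp_zero]

lemma T_vert_vert {V W : VFM} (hV : D.Hp V = 0) (hW : D.Hp W = 0) :
    D.T V W = D.Hp (D.nabla V W) := by
  simp [T, Vp_eq_self hV, Vp_eq_self hW, hW, nabla_zero_right, Vp_zero]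

lemma A_horiz_horiz {X Y : VFM} (hX : D.Vp X = 0) (hY : D.Vp Y = 0) :
    D.A X Y = D.Vp (D.nabla X Y) := by
  simp [A, Hp_eq_self hX, Hp_eq_self hY, hY, nabla_zero_right, Hp_zero]

lemma A_horiz_vert {X V : VFM} (hX : D.Vp X = 0) (hV : D.Hp V = 0) :
    D.A X V = D.Hp (D.nabla X V) := by
  simp [A, Hp_eq_self hX, Vp_eq_self hV, hV, nabla_zero_right, Vp_zero]

lemma Hp_phi (R : VFM → VFM) (E : VFM) : D.Hp (D.phi R E) = 0 := D.Hp_Vp _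

lemma Vp_om (R : VFM → VFM) (E : VFM) : D.Vp (D.om R E) = 0 := D.Vp_Hp _

section Parallel

variable {R : VFM → VFM}

lemma nabla_phi_add_nabla_om (hadd : ∀ X Y, R (X + Y) = R X + R Y)
    (hpar : D.IsParallel R) (E F : VFM) :
    D.nabla E (D.phi R F) + D.nabla E (D.om R F)
      = R (D.Vp (D.nabla E F)) + R (D.Hp (D.nabla E F)) := by
  rw [← D.nabla_add_right, phi, om, D.Vp_add_Hp, hpar, ← hadd, D.Vp_add_Hp]

lemma Vp_nabla_phi_add_Vp_nabla_om (hadd : ∀ X Y, R (X + Y) = R X + R Y)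
    (hpar : D.IsParallel R) (E F : VFM) :
    D.Vp (D.nabla E (D.phi R F)) + D.Vp (D.nabla E (D.om R F))
      = D.phi R (D.Vp (D.nabla E F)) + D.phi R (D.Hp (D.nabla E F)) := by
  rw [← D.Vp_add, nabla_phi_add_nabla_om hadd hpar, D.Vp_add]; rfl

lemma Hp_nabla_phi_add_Hp_nabla_om (hadd : ∀ X Y, R (X + Y) = R X + R Y)
    (hpar : D.IsParallel R) (E F : VFM) :
    D.Hp (D.nabla E (D.phi R F)) + D.Hp (D.nabla E (D.om R F))
      = D.om R (D.Vp (D.nabla E F)) + D.om R (D.Hp (D.nabla E F)) := by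
  rw [← D.Hp_add, nabla_phi_add_nabla_om hadd hpar, D.Hp_add]; rfl

lemma covariant_identities_vertical (hadd : ∀ X Y, R (X + Y) = R X + R Y)
    (hpar : D.IsParallel R) {V W : VFM} (hV : D.Hp V = 0) (hW : D.Hp W = 0) :
    (D.hatNabla V (D.phi R W) + D.T V (D.om R W)
        = D.phi R (D.hatNabla V W) + D.phi R (D.T V W)) ∧
      (D.T V (D.phi R W) + D.Hp (D.nabla V (D.om R W))
        = D.om R (D.T V W) + D.om R (D.hatNabla V W)) := by
  rw [T_vert_horiz hV (Vp_om R W), T_vert_vert hV (Hp_phi R W), T_vert_vert hV hW,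
    hatNabla, hatNabla, add_comm (D.om R _)]
  exact ⟨Vp_nabla_phi_add_Vp_nabla_om hadd hpar V W,
    Hp_nabla_phi_add_Hp_nabla_om hadd hpar V W⟩

lemma covariant_identities_horizontal (hadd : ∀ X Y, R (X + Y) = R X + R Y)
    (hpar : D.IsParallel R) {X Y : VFM} (hX : D.Vp X = 0) (hY : D.Vp Y = 0) :
    (D.A X (D.om R Y) + D.Vp (D.nabla X (D.phi R Y))
        = D.phi R (D.A X Y) + D.phi R (D.Hp (D.nabla X Y))) ∧
      (D.Hp (D.nabla X (D.om R Y)) + D.A X (D.phi R Y)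
        = D.om R (D.A X Y) + D.om R (D.Hp (D.nabla X Y))) := by
  rw [A_horiz_horiz hX (Vp_om R Y), A_horiz_vert hX (Hp_phi R Y), A_horiz_horiz hX hY,
    add_comm (D.Vp _), add_comm (D.Hp _)]
  exact ⟨Vp_nabla_phi_add_Vp_nabla_om hadd hpar X Y,
    Hp_nabla_phi_add_Hp_nabla_om hadd hpar X Y⟩

lemma covariant_identities_mixed (hadd : ∀ X Y, R (X + Y) = R X + R Y)
    (hpar : D.IsParallel R) {V X : VFM} (hV : D.Hp V = 0) (hX : D.Vp X = 0) :
    (D.A X (D.om R V) + D.Vp (D.nabla X (D.phi R V))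
        = D.phi R (D.A X V) + D.phi R (D.Vp (D.nabla X V))) ∧
      (D.Hp (D.nabla X (D.om R V)) + D.A X (D.phi R V)
        = D.om R (D.A X V) + D.om R (D.Vp (D.nabla X V))) := by
  rw [A_horiz_horiz hX (Vp_om R V), A_horiz_vert hX (Hp_phi R V), A_horiz_vert hX hV,
    add_comm (D.Vp _), add_comm (D.Hp _), add_comm (D.phi R _), add_comm (D.om R _)]
  exact ⟨Vp_nabla_phi_add_Vp_nabla_om hadd hpar X V,
    Hp_nabla_phi_add_Hp_nabla_om hadd hpar X V⟩

end Parallel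

end HorizConfSubmersion

namespace HyperkahlerTriple

variable {M VFM VFN : Type} [AddCommGroup VFM] [Module (M → ℝ) VFM]
    [AddCommGroup VFN] [Module (M → ℝ) VFN] {D : HorizConfSubmersion M VFM VFN}
    (Q : HyperkahlerTriple D) {R : VFM → VFM}

lemma map_add_of_mem (hR : R = Q.I ∨ R = Q.J ∨ R = Q.K) (X Y : VFM) :
    R (X + Y) = R X + R Y := by
  rcases hR with rfl | rfl | rfl
  exacts [Q.hermitian_I.1 X Y, Q.hermitian_J.1 X Y, Q.hermitian_K.1 X Y]

lemma isParallel_of_mem (hR : R = Q.I ∨ R = Q.J ∨ R = Q.K) : D.IsParallel R := by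
  rcases hR with rfl | rfl | rfl
  exacts [Q.parallel_I, Q.parallel_J, Q.parallel_K]

end HyperkahlerTriple

theorem covariant_identities_general
    {M VFM VFN : Type} [AddCommGroup VFM] [Module (M → ℝ) VFM]
    [AddCommGroup VFN] [Module (M → ℝ) VFN]
    (D : HorizConfSubmersion M VFM VFN) (Q : HyperkahlerTriple D)
    (R : VFM → VFM) (hR : R = Q.I ∨ R = Q.J ∨ R = Q.K) :
    -- (1) for vertical V, W
    (∀ V W, D.Hp V = 0 → D.Hp W = 0 →
      (D.hatNabla V (D.phi R W) + D.T V (D.om R W)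
        = D.phi R (D.hatNabla V W) + D.phi R (D.T V W)) ∧
      (D.T V (D.phi R W) + D.Hp (D.nabla V (D.om R W))
        = D.om R (D.T V W) + D.om R (D.hatNabla V W))) ∧
    -- (2) for horizontal X, Y
    (∀ X Y, D.Vp X = 0 → D.Vp Y = 0 →
      (D.A X (D.om R Y) + D.Vp (D.nabla X (D.phi R Y))
        = D.phi R (D.A X Y) + D.phi R (D.Hp (D.nabla X Y))) ∧
      (D.Hp (D.nabla X (D.om R Y)) + D.A X (D.phi R Y)
        = D.om R (D.A X Y) + D.om R (D.Hp (D.nabla X Y)))) ∧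
    -- (3) for vertical V and horizontal X
    (∀ V X, D.Hp V = 0 → D.Vp X = 0 →
      (D.A X (D.om R V) + D.Vp (D.nabla X (D.phi R V))
        = D.phi R (D.A X V) + D.phi R (D.Vp (D.nabla X V))) ∧
      (D.Hp (D.nabla X (D.om R V)) + D.A X (D.phi R V)
        = D.om R (D.A X V) + D.om R (D.Vp (D.nabla X V)))) := by
  have hadd := Q.map_add_of_mem hR
  have hpar := Q.isParallel_of_mem hR
  exact ⟨fun _ _ hV hW => D.covariant_identities_vertical hadd hpar hV hW,
    fun _ _ hX hY => D.covariant_identities_horizontal hadd hpar hX hY,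
    fun _ _ hV hX => D.covariant_identities_mixed hadd hpar hV hX⟩

/-- the basic covariant derivative identities for an almost
h-conformal slant submersion from a hyperkähler manifold. -/
theorem covariant_identities
    {M VFM VFN : Type} [AddCommGroup VFM] [Module (M → ℝ) VFM]
    [AddCommGroup VFN] [Module (M → ℝ) VFN]
    (D : HorizConfSubmersion M VFM VFN) (Q : HyperkahlerTriple D)
    (θI θJ θK : ℝ)
    (hslantI : D.IsSlantOp Q.I θI) (hslantJ : D.IsSlantOp Q.J θJ)
    (hslantK : D.IsSlantOp Q.K θK)
    (R : VFM → VFM) (hR : R = Q.I ∨ R = Q.J ∨ R = Q.K) :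
    -- (1) for vertical V, W
    (∀ V W, D.Hp V = 0 → D.Hp W = 0 →
      (D.hatNabla V (D.phi R W) + D.T V (D.om R W)
        = D.phi R (D.hatNabla V W) + D.phi R (D.T V W)) ∧
      (D.T V (D.phi R W) + D.Hp (D.nabla V (D.om R W))
        = D.om R (D.T V W) + D.om R (D.hatNabla V W))) ∧
    -- (2) for horizontal X, Y
    (∀ X Y, D.Vp X = 0 → D.Vp Y = 0 →
      (D.A X (D.om R Y) + D.Vp (D.nabla X (D.phi R Y))
        = D.phi R (D.A X Y) + D.phi R (D.Hp (D.nabla X Y))) ∧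
      (D.Hp (D.nabla X (D.om R Y)) + D.A X (D.phi R Y)
        = D.om R (D.A X Y) + D.om R (D.Hp (D.nabla X Y)))) ∧
    -- (3) for vertical V and horizontal X
    (∀ V X, D.Hp V = 0 → D.Vp X = 0 →
      (D.A X (D.om R V) + D.Vp (D.nabla X (D.phi R V))
        = D.phi R (D.A X V) + D.phi R (D.Vp (D.nabla X V))) ∧
      (D.Hp (D.nabla X (D.om R V)) + D.A X (D.phi R V)
        = D.om R (D.A X V) + D.om R (D.Vp (D.nabla X V)))) :=
  covariant_identities_general D Q R hR
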